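/- Let m ≥ 1, n ≥ 1 be integers, x ∈ ℝⁿ, and L > mn. Then there is a constant C depending only on L, m, n such that sup_{γ>0} ∫_{(ℝⁿ)^m} γ^{−mn} (1 + |(x−y_1,…,x−y_m)|/γ)^{−L} ∏_{j=1}^m |f_j(y_j)| dy⃗ ≤ C · M(f_1,…,f_m)(x) for all f_1,…,f_m ∈ L^∞_c(ℝⁿ). -/

import Mathlib

open MeasureTheory ENNReal Filter
open scoped FourierTransform

noncomputable section

namespace RoughMSI

/-- ℝⁿ with the Euclidean norm. -/
abbrev Rn (n : ℕ) : Type := EuclideanSpace ℝ (Fin n)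

/-- (ℝⁿ)^m with the Euclidean norm (identified with ℝ^{mn}). -/
abbrev Emn (m n : ℕ) : Type := EuclideanSpace ℝ (Fin m × Fin n)

/-- The j-th component in ℝⁿ of a point y⃗ ∈ (ℝⁿ)^m. -/
def projE {m n : ℕ} (y : Emn m n) (j : Fin m) : Rn n := WithLp.toLp 2 (fun i => y (j, i))

/-- The diagonal point (x,…,x) ∈ (ℝⁿ)^m. -/
def diagE {m n : ℕ} (x : Rn n) : Emn m n := WithLp.toLp 2 (fun p => x p.2)

/-- Closed axis-parallel cube with center `c` and side length `t`. -/
def cubeQ {n : ℕ} (c : Rn n) (t : ℝ) : Set (Rn n) := {y | ∀ i, |y i - c i| ≤ t / 2}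

/-- Average `|Q|⁻¹ ∫_Q f` of an `ℝ≥0∞`-valued function. -/
def avgE {n : ℕ} (Q : Set (Rn n)) (f : Rn n → ℝ≥0∞) : ℝ≥0∞ :=
  (volume Q)⁻¹ * ∫⁻ x in Q, f x

/-- The multi-sublinear Hardy–Littlewood maximal function `𝐌(f₁,…,f_m)`. -/
def MM {m n : ℕ} (f : Fin m → Rn n → ℝ) (x : Rn n) : ℝ≥0∞ :=
  ⨆ (c : Rn n) (t : ℝ) (_ : 0 < t) (_ : x ∈ cubeQ c t),
    ∏ j, avgE (cubeQ c t) (fun u => (‖f j u‖₊ : ℝ≥0∞))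

/-- The `L^r` variant `𝐌_r(f₁,…,f_m) = 𝐌(|f₁|^r,…,|f_m|^r)^{1/r}`. -/
def MMr {m n : ℕ} (r : ℝ) (f : Fin m → Rn n → ℝ) (x : Rn n) : ℝ≥0∞ :=
  (MM (fun j u => |f j u| ^ r) x) ^ r⁻¹

/-- The sharp maximal function `𝓜_r^♯ h`. -/
def sharpM {n : ℕ} (r : ℝ) (h : Rn n → ℂ) (x : Rn n) : ℝ≥0∞ :=
  ⨆ (c : Rn n) (t : ℝ) (_ : 0 < t) (_ : x ∈ cubeQ c t),
    ⨅ a : ℂ, (avgE (cubeQ c t) (fun y => (‖h y - a‖₊ : ℝ≥0∞) ^ r)) ^ r⁻¹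

/-- Bounded measurable functions with compact support, `L^∞_c(ℝⁿ)`. -/
def BddCompactSupp {n : ℕ} (f : Rn n → ℝ) : Prop :=
  Measurable f ∧ (∃ C : ℝ, ∀ x, |f x| ≤ C) ∧ HasCompactSupport f

/-- A weight: nonnegative and locally integrable. -/
def IsWeight {n : ℕ} (w : Rn n → ℝ) : Prop :=
  (∀ x, 0 ≤ w x) ∧ LocallyIntegrable w volume

/-- The weighted Lebesgue (quasi)norm `‖f‖_{L^p(w)}`. -/
def wnorm {n : ℕ} {F : Type*} [NNNorm F] (p : ℝ) (w : Rn n → ℝ) (f : Rn n → F) : ℝ≥0∞ :=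
  (∫⁻ x, (‖f x‖₊ : ℝ≥0∞) ^ p * ENNReal.ofReal (w x)) ^ p⁻¹

/-- The harmonic exponent: `1/pharm p⃗ = ∑_j 1/p_j`. -/
def pharm {m : ℕ} (pv : Fin m → ℝ) : ℝ := (∑ j, (pv j)⁻¹)⁻¹

/-- The weight `v_{w⃗} = ∏_j w_j^{p/p_j}` with `1/p = ∑_j 1/p_j`. -/
def vweight {m n : ℕ} (pv : Fin m → ℝ) (w : Fin m → Rn n → ℝ) (x : Rn n) : ℝ :=
  ∏ j, (w j x) ^ (pharm pv / pv j)

/-- The factor `(|Q|⁻¹∫_Q w_j^{1-p_j'})^{1/p_j'}`, interpreted as `(essinf_Q w_j)⁻¹`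
when `p_j = 1`.  Here `1 - p_j' = -1/(p_j-1)` and `1/p_j' = (p_j-1)/p_j`. -/
def apFactor {n : ℕ} (pj : ℝ) (wj : Rn n → ℝ) (Q : Set (Rn n)) : ℝ≥0∞ :=
  if pj = 1 then (essInf (fun x => ENNReal.ofReal (wj x)) (volume.restrict Q))⁻¹
  else (avgE Q (fun x => ENNReal.ofReal (wj x) ^ (-(pj - 1)⁻¹))) ^ ((pj - 1) / pj)

/-- Membership in the multiple weight class `A_{p⃗}((ℝⁿ)^m)`. -/
def MemApVec {m n : ℕ} (pv : Fin m → ℝ) (w : Fin m → Rn n → ℝ) : Prop :=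
  ∃ C : ℝ≥0∞, C ≠ ⊤ ∧ ∀ (c : Rn n) (t : ℝ), 0 < t →
    (avgE (cubeQ c t) (fun x => ENNReal.ofReal (vweight pv w x))) ^ (∑ j, (pv j)⁻¹) *
      ∏ j, apFactor (pv j) (w j) (cubeQ c t) ≤ C

/-- The Muckenhoupt `A_s` characteristic `[u]_{A_s}` (for `1 < s < ∞`). -/
def apConst {n : ℕ} (s : ℝ) (u : Rn n → ℝ) : ℝ≥0∞ :=
  ⨆ (c : Rn n) (t : ℝ) (_ : 0 < t),
    avgE (cubeQ c t) (fun x => ENNReal.ofReal (u x)) *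
      (avgE (cubeQ c t) (fun x => ENNReal.ofReal (u x) ^ (-(s - 1)⁻¹))) ^ (s - 1)

/-- The surface measure on the unit sphere 𝕊^{mn-1} ⊂ (ℝⁿ)^m. -/
def sphereMeasure (m n : ℕ) : Measure (Metric.sphere (0 : Emn m n) 1) :=
  (volume : Measure (Emn m n)).toSphere

/-- `‖Ω‖_{L^q(𝕊^{mn-1})}`. -/
def sphereLq (m n : ℕ) (q : ℝ≥0∞) (Ω : Emn m n → ℝ) : ℝ≥0∞ :=
  eLpNorm (fun x : Metric.sphere (0 : Emn m n) 1 => Ω x) q (sphereMeasure m n)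

/-- Vanishing mean of Ω on the sphere. -/
def MeanZero (m n : ℕ) (Ω : Emn m n → ℝ) : Prop :=
  ∫ x : Metric.sphere (0 : Emn m n) 1, Ω x ∂(sphereMeasure m n) = 0

/-- The rough kernel `K(y⃗) = Ω(y⃗/|y⃗|)/|y⃗|^{mn}`. -/
def Kker (m n : ℕ) (Ω : Emn m n → ℝ) (y : Emn m n) : ℝ :=
  Ω (‖y‖⁻¹ • y) / ‖y‖ ^ (m * n)

/-- The Fourier transform of a Schwartz function on (ℝⁿ)^m. -/
def PsiHat {m n : ℕ} (Ψ : SchwartzMap (Emn m n) ℂ) : Emn m n → ℂ := 𝓕 ⇑Ψ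

/-- The Littlewood–Paley assumptions on Ψ: `Ψ̂` is supported in the annulus
`{1/2 ≤ |ξ| ≤ 2}` and `∑_{k ∈ ℤ} Ψ̂(2^{-k}ξ) = 1` for `ξ ≠ 0`. -/
def GoodPsi {m n : ℕ} (Ψ : SchwartzMap (Emn m n) ℂ) : Prop :=
  (∀ ξ : Emn m n, PsiHat Ψ ξ ≠ 0 → 1 / 2 ≤ ‖ξ‖ ∧ ‖ξ‖ ≤ 2) ∧
  (∀ ξ : Emn m n, ξ ≠ 0 → ∑' k : ℤ, PsiHat Ψ ((2 : ℝ) ^ (-k) • ξ) = 1)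

/-- `Ψ_k := 2^{kmn} Ψ(2^k ·)`. -/
def Psik {m n : ℕ} (Ψ : SchwartzMap (Emn m n) ℂ) (k : ℤ) (y : Emn m n) : ℂ :=
  (2 : ℂ) ^ (k * (m * n : ℤ)) * Ψ ((2 : ℝ) ^ k • y)

/-- `K^γ(y⃗) := Ψ̂(2^γ y⃗) K(y⃗)`. -/
def Kgamma (m n : ℕ) (Ω : Emn m n → ℝ) (Ψ : SchwartzMap (Emn m n) ℂ) (γ : ℤ)
    (y : Emn m n) : ℂ :=
  PsiHat Ψ ((2 : ℝ) ^ γ • y) * (Kker m n Ω y : ℂ)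

/-- `K_μ^γ := Ψ_{μ+γ} ∗ K^γ`. -/
def Kmg (m n : ℕ) (Ω : Emn m n → ℝ) (Ψ : SchwartzMap (Emn m n) ℂ) (μ γ : ℤ)
    (y : Emn m n) : ℂ :=
  ∫ z : Emn m n, Psik Ψ (μ + γ) (y - z) * Kgamma m n Ω Ψ γ z

/-- `K_μ := ∑_{γ ∈ ℤ} K_μ^γ`. -/
def Kmu (m n : ℕ) (Ω : Emn m n → ℝ) (Ψ : SchwartzMap (Emn m n) ℂ) (μ : ℤ)
    (y : Emn m n) : ℂ :=
  ∑' γ : ℤ, Kmg m n Ω Ψ μ γ y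

/-- The operator `T_{K_μ^γ}`. -/
def TKmg (m n : ℕ) (Ω : Emn m n → ℝ) (Ψ : SchwartzMap (Emn m n) ℂ) (μ γ : ℤ)
    (f : Fin m → Rn n → ℝ) (x : Rn n) : ℂ :=
  ∫ y : Emn m n, Kmg m n Ω Ψ μ γ y * ∏ j, (f j (x - projE y j) : ℂ)

/-- The operator `T_{K_μ}`. -/
def TKmu (m n : ℕ) (Ω : Emn m n → ℝ) (Ψ : SchwartzMap (Emn m n) ℂ) (μ : ℤ)
    (f : Fin m → Rn n → ℝ) (x : Rn n) : ℂ :=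
  ∫ y : Emn m n, Kmu m n Ω Ψ μ y * ∏ j, (f j (x - projE y j) : ℂ)

/-- The low-frequency kernel `𝒦 := ∑_{μ ≤ 0} K_μ`. -/
def Kcal (m n : ℕ) (Ω : Emn m n → ℝ) (Ψ : SchwartzMap (Emn m n) ℂ) (y : Emn m n) : ℂ :=
  ∑' μ : ℤ, if μ ≤ 0 then Kmu m n Ω Ψ μ y else 0

/-- The operator `T_𝒦`. -/
def TKcal (m n : ℕ) (Ω : Emn m n → ℝ) (Ψ : SchwartzMap (Emn m n) ℂ)
    (f : Fin m → Rn n → ℝ) (x : Rn n) : ℂ :=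
  ∫ y : Emn m n, Kcal m n Ω Ψ y * ∏ j, (f j (x - projE y j) : ℂ)

/-- Truncation of `g` to `Q*` (for `lam = false`) or to `(Q*)ᶜ` (for `lam = true`). -/
def trunc {n : ℕ} (Qs : Set (Rn n)) (lam : Bool) (g : Rn n → ℝ) : Rn n → ℝ :=
  fun u => if lam then Qsᶜ.indicator g u else Qs.indicator g u



/-! ### Auxiliary lemmas -/

private def eSum (m n : ℕ) : (Fin n ⊕ (Fin m × Fin n)) ≃ (Fin (m+1) × Fin n) where
  toFun := Sum.elim (fun i => (0, i)) (fun p => (p.1.succ, p.2))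
  invFun := fun p => if h : p.1 = 0 then Sum.inl p.2 else Sum.inr (p.1.pred h, p.2)
  left_inv := by rintro (i | ⟨j, i⟩) <;> simp [Fin.succ_ne_zero]
  right_inv := by
    rintro ⟨j, i⟩
    rcases Fin.eq_zero_or_eq_succ j with h | ⟨j', rfl⟩
    · subst h; simp
    · simp [Fin.succ_ne_zero]

theorem lintegral_block_prod (n : ℕ) : ∀ (m : ℕ) (H : Fin m → (Fin n → ℝ) → ℝ≥0∞),
    (∀ j, Measurable (H j)) →
    ∫⁻ y : Fin m × Fin n → ℝ, ∏ j, H j (fun i => y (j, i)) = ∏ j, ∫⁻ u : Fin n → ℝ, H j u := by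
  intro m
  induction m with
  | zero => intro H _; rw [Finset.univ_eq_empty]; simp [volume_pi, Measure.pi_univ]
  | succ m ih =>
    intro H hH
    have hmeas : Measurable fun y : Fin (m+1) × Fin n → ℝ => ∏ j, H j (fun i => y (j, i)) :=
      Finset.measurable_prod _ fun j _ =>
        (hH j).comp (measurable_pi_lambda _ fun i => measurable_pi_apply _)
    have MP : MeasurePreserving
        (fun z : (Fin n → ℝ) × (Fin m × Fin n → ℝ) =>
          (MeasurableEquiv.piCongrLeft (fun _ => ℝ) (eSum m n))
            ((MeasurableEquiv.sumPiEquivProdPi (fun _ : Fin n ⊕ (Fin m × Fin n) => ℝ)).symm z))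
        volume volume :=
      (volume_measurePreserving_piCongrLeft (fun _ => ℝ) (eSum m n)).comp
        (volume_measurePreserving_sumPiEquivProdPi_symm (fun _ => ℝ))
    rw [← MP.lintegral_comp hmeas]
    have hval : ∀ (z : (Fin n → ℝ) × (Fin m × Fin n → ℝ)) (p : Fin n ⊕ (Fin m × Fin n)),
        (MeasurableEquiv.piCongrLeft (fun _ => ℝ) (eSum m n))
          ((MeasurableEquiv.sumPiEquivProdPi (fun _ : Fin n ⊕ (Fin m × Fin n) => ℝ)).symm z)
          (eSum m n p) = Sum.elim z.1 z.2 p := by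
      intro z p
      rw [MeasurableEquiv.coe_piCongrLeft, Equiv.piCongrLeft_apply_apply]
      cases p <;> rfl
    have key : ∀ z : (Fin n → ℝ) × (Fin m × Fin n → ℝ),
        (∏ j, H j (fun i => (MeasurableEquiv.piCongrLeft (fun _ => ℝ) (eSum m n))
          ((MeasurableEquiv.sumPiEquivProdPi (fun _ : Fin n ⊕ (Fin m × Fin n) => ℝ)).symm z)
          (j, i)))
        = H 0 z.1 * ∏ j : Fin m, H j.succ (fun i => z.2 (j, i)) := by
      intro z
      rw [Fin.prod_univ_succ]
      exact congrArg₂ (· * ·) (congrArg (H 0) (funext fun i => hval z (Sum.inl i)))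
        (Finset.prod_congr rfl fun j _ =>
          congrArg (H j.succ) (funext fun i => hval z (Sum.inr (j, i))))
    simp_rw [key]
    rw [MeasureTheory.Measure.volume_eq_prod, lintegral_prod_mul (f := H 0)
      (g := fun b : Fin m × Fin n → ℝ => ∏ j : Fin m, H j.succ fun i => b (j, i))
      (hH 0).aemeasurable
      ((Finset.measurable_prod _ fun j _ =>
        (hH j.succ).comp (measurable_pi_lambda _ fun i => measurable_pi_apply _)).aemeasurable)]
    rw [ih (fun j => H j.succ) (fun j => hH j.succ), Fin.prod_univ_succ]

theorem lintegral_block_prod' {m n : ℕ} (h : Fin m → Rn n → ℝ≥0∞) (hh : ∀ j, Measurable (h j)) :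
    ∫⁻ y : Emn m n, ∏ j, h j (projE y j) = ∏ j, ∫⁻ u : Rn n, h j u := by
  have hF : Measurable fun y : Emn m n => ∏ j, h j (projE y j) :=
    Finset.measurable_prod _ fun j _ =>
      (hh j).comp ((WithLp.measurable_toLp 2 _).comp (measurable_pi_lambda _ fun i => (measurable_pi_apply _).comp (WithLp.measurable_ofLp 2 _)))
  rw [← ((EuclideanSpace.volume_preserving_symm_measurableEquiv_toLp (Fin m × Fin n)).symm
    (MeasurableEquiv.toLp 2 _).symm).lintegral_comp hF]
  have hstep : ∀ j, (∫⁻ u : Rn n, h j u) =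
      ∫⁻ z : Fin n → ℝ, h j (((MeasurableEquiv.toLp 2 (Fin n → ℝ)).symm).symm z) := fun j =>
    (((EuclideanSpace.volume_preserving_symm_measurableEquiv_toLp (Fin n)).symm
      (MeasurableEquiv.toLp 2 _).symm).lintegral_comp (hh j)).symm
  simp_rw [hstep]
  exact lintegral_block_prod n m
    (fun j z => h j (((MeasurableEquiv.toLp 2 (Fin n → ℝ)).symm).symm z))
    (fun j => (hh j).comp (MeasurableEquiv.measurable _))

lemma cubeQ_eq_preimage {n : ℕ} (c : Rn n) (t : ℝ) :
    cubeQ c t = ((MeasurableEquiv.toLp 2 (Fin n → ℝ)).symm) ⁻¹'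
      (Set.univ.pi fun i => Set.Icc (c i - t/2) (c i + t/2)) := by
  ext y
  simp only [cubeQ, Set.mem_setOf_eq, Set.mem_preimage, Set.mem_pi, Set.mem_univ, true_implies,
    Set.mem_Icc]
  refine forall_congr' fun i => ?_
  rw [abs_sub_le_iff]
  constructor
  · rintro ⟨h1, h2⟩
    constructor <;> [skip; skip] <;> dsimp [MeasurableEquiv.toLp_symm_apply] <;> linarith
  · rintro ⟨h1, h2⟩
    have : ((MeasurableEquiv.toLp 2 (Fin n → ℝ)).symm) y i = y i := rfl
    rw [this] at h1 h2
    constructor <;> linarith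

lemma measurableSet_cubeQ {n : ℕ} (c : Rn n) (t : ℝ) : MeasurableSet (cubeQ c t) := by
  rw [cubeQ_eq_preimage]
  exact (MeasurableEquiv.measurable _) (MeasurableSet.univ_pi fun i => measurableSet_Icc)

lemma volume_cubeQ {n : ℕ} (c : Rn n) (t : ℝ) :
    volume (cubeQ c t) = ENNReal.ofReal t ^ n := by
  rw [cubeQ_eq_preimage,
    (EuclideanSpace.volume_preserving_symm_measurableEquiv_toLp (Fin n)).measure_preimage
      ((MeasurableSet.univ_pi fun i => measurableSet_Icc).nullMeasurableSet)]
  rw [volume_pi_pi]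
  have : ∀ i : Fin n, volume (Set.Icc (c i - t/2) (c i + t/2)) = ENNReal.ofReal t := by
    intro i; rw [Real.volume_Icc]; ring_nf
  simp [this]

lemma coord_le_norm {ι : Type*} [Fintype ι] (v : EuclideanSpace ℝ ι) (p : ι) : |v p| ≤ ‖v‖ := by
  rw [EuclideanSpace.norm_eq, ← Real.sqrt_sq_eq_abs (v p)]
  apply Real.sqrt_le_sqrt
  calc v p ^ 2 = ‖v p‖ ^ 2 := by rw [Real.norm_eq_abs, sq_abs]
  _ ≤ ∑ i, ‖v i‖ ^ 2 :=
    Finset.single_le_sum (f := fun i => ‖v i‖ ^ 2) (fun i _ => sq_nonneg _) (Finset.mem_univ p)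

lemma ball_bound {m n : ℕ} (x : Rn n) (f : Fin m → Rn n → ℝ) (hf : ∀ j, Measurable (f j))
    (s : ℝ) (hs : 0 < s) :
    ∫⁻ y in Metric.closedBall (diagE x) s, ∏ j, (‖f j (projE y j)‖₊ : ℝ≥0∞)
      ≤ ENNReal.ofReal (2*s) ^ (m*n) * MM f x := by
  set Q := cubeQ x (2*s) with hQ
  have hg : ∀ j, Measurable fun u => (‖f j u‖₊ : ℝ≥0∞) := fun j =>
    (hf j).nnnorm.coe_nnreal_ennreal
  have hvol : volume Q = ENNReal.ofReal (2*s) ^ n := volume_cubeQ _ _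
  have hvol0 : (ENNReal.ofReal (2*s)) ^ n ≠ 0 :=
    pow_ne_zero _ (by simp only [ne_eq, ENNReal.ofReal_eq_zero, not_le]; linarith)
  have hvoltop : (ENNReal.ofReal (2*s)) ^ n ≠ ⊤ := ENNReal.pow_ne_top ENNReal.ofReal_ne_top
  have hsub : ∀ y : Emn m n, y ∈ Metric.closedBall (diagE x) s → ∀ j, projE y j ∈ Q := by
    intro y hy j i
    set v : Emn m n := y - diagE x with hv
    have h1 : |v (j,i)| ≤ ‖v‖ := coord_le_norm v (j, i)
    have h3 : ‖v‖ = dist y (diagE x) := (dist_eq_norm _ _).symm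
    have h4 := Metric.mem_closedBall.mp hy
    have h5 : |projE y j i - x i| ≤ s := by
      rw [show projE y j i - x i = v (j, i) by rw [hv]; simp [projE, diagE]]
      calc |v (j,i)| ≤ ‖v‖ := h1
      _ = dist y (diagE x) := h3
      _ ≤ s := h4
    linarith
  calc ∫⁻ y in Metric.closedBall (diagE x) s, ∏ j, (‖f j (projE y j)‖₊ : ℝ≥0∞)
      ≤ ∫⁻ y : Emn m n, ∏ j, Q.indicator (fun u => (‖f j u‖₊ : ℝ≥0∞)) (projE y j) := by
        rw [← lintegral_indicator measurableSet_closedBall]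
        refine lintegral_mono fun y => ?_
        by_cases hy : y ∈ Metric.closedBall (diagE x) s
        · rw [Set.indicator_of_mem hy]
          refine le_of_eq (Finset.prod_congr rfl fun j _ => ?_)
          rw [Set.indicator_of_mem (hsub y hy j)]
        · rw [Set.indicator_of_notMem hy]; exact zero_le
    _ = ∏ j, ∫⁻ u in Q, (‖f j u‖₊ : ℝ≥0∞) := by
        rw [lintegral_block_prod' _
          (fun j => ((hg j).indicator (measurableSet_cubeQ _ _)))]
        exact Finset.prod_congr rfl fun j _ =>
          lintegral_indicator (measurableSet_cubeQ _ _) _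
    _ = ∏ j, (volume Q * avgE Q (fun u => (‖f j u‖₊ : ℝ≥0∞))) := by
        refine Finset.prod_congr rfl fun j _ => ?_
        rw [avgE, ← mul_assoc, hvol, ENNReal.mul_inv_cancel hvol0 hvoltop, one_mul]
    _ = ENNReal.ofReal (2*s) ^ (m*n) * ∏ j, avgE Q (fun u => (‖f j u‖₊ : ℝ≥0∞)) := by
        rw [Finset.prod_mul_distrib, Finset.prod_const, hvol, Finset.card_univ, Fintype.card_fin,
          ← pow_mul, Nat.mul_comm n m]
    _ ≤ ENNReal.ofReal (2*s) ^ (m*n) * MM f x := by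
        refine mul_le_mul_right ?_ _
        refine le_iSup_of_le x (le_iSup_of_le (2*s) (le_iSup_of_le (by linarith) ?_))
        refine le_iSup_of_le ?_ le_rfl
        intro i; simp; linarith

lemma kernel_pointwise {m n : ℕ} {L : ℝ} (hL0 : 0 < L)
    (γ : ℝ) (hγ : 0 < γ) (x : Rn n) (y : Emn m n) :
    ENNReal.ofReal (γ ^ (-((m : ℝ) * n)) * (1 + ‖diagE x - y‖ / γ) ^ (-L)) ≤
      ∑' k : ℕ, ENNReal.ofReal (γ ^ (-((m : ℝ) * n)) * (2:ℝ) ^ L * ((2:ℝ) ^ (-L)) ^ k) *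
        (Metric.closedBall (diagE x) ((2:ℝ) ^ k * γ)).indicator (fun _ => (1:ℝ≥0∞)) y := by
  set r : ℝ := ‖diagE x - y‖ with hrdef
  have hr : 0 ≤ r := norm_nonneg _
  have hP : ∃ k : ℕ, r ≤ 2 ^ k * γ := by
    obtain ⟨k, hk⟩ := pow_unbounded_of_one_lt (r / γ) (one_lt_two (α := ℝ))
    refine ⟨k, ?_⟩
    rw [div_lt_iff₀ hγ] at hk
    linarith
  obtain ⟨k, hk1, hmin⟩ : ∃ k : ℕ, (r ≤ 2 ^ k * γ) ∧ ∀ k' < k, ¬(r ≤ 2 ^ k' * γ) :=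
    ⟨Nat.find hP, Nat.find_spec hP, fun k' h => Nat.find_min hP h⟩
  have hmem : y ∈ Metric.closedBall (diagE x) ((2:ℝ) ^ k * γ) := by
    rw [Metric.mem_closedBall, dist_eq_norm, norm_sub_rev]
    exact hk1
  have hdiv : 0 ≤ r / γ := div_nonneg hr hγ.le
  have key : (1 + r / γ) ^ (-L) ≤ (2:ℝ) ^ L * ((2:ℝ) ^ (-L)) ^ k := by
    cases' Nat.eq_zero_or_pos k with hk0 hkpos
    · rw [hk0, pow_zero, mul_one]
      calc (1 + r / γ) ^ (-L) ≤ 1 :=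
            Real.rpow_le_one_of_one_le_of_nonpos (by linarith) (by linarith)
      _ ≤ (2:ℝ) ^ L := by
          calc (1:ℝ) = (2:ℝ) ^ (0:ℝ) := (Real.rpow_zero 2).symm
          _ ≤ (2:ℝ) ^ L := Real.rpow_le_rpow_of_exponent_le one_le_two hL0.le
    · obtain ⟨k', rfl⟩ : ∃ k', k = k' + 1 := ⟨k - 1, (Nat.succ_pred_eq_of_pos hkpos).symm⟩
      have hnot : ¬ (r ≤ 2 ^ k' * γ) := hmin k' (Nat.lt_succ_self k')
      push_neg at hnot
      have hlt : (2:ℝ) ^ k' < r / γ := (lt_div_iff₀ hγ).mpr hnot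
      have hble : (2:ℝ) ^ k' ≤ 1 + r / γ := by linarith
      calc (1 + r / γ) ^ (-L) ≤ ((2:ℝ) ^ k') ^ (-L) :=
            Real.rpow_le_rpow_of_nonpos (by positivity) hble (by linarith)
      _ = (2:ℝ) ^ L * ((2:ℝ) ^ (-L)) ^ (k' + 1) := by
          rw [← Real.rpow_natCast (2:ℝ) k', ← Real.rpow_natCast ((2:ℝ) ^ (-L)) (k' + 1),
            ← Real.rpow_mul (by norm_num), ← Real.rpow_mul (by norm_num),
            ← Real.rpow_add (by norm_num : (0:ℝ) < 2)]
          congr 1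
          push_cast
          ring
  calc ENNReal.ofReal (γ ^ (-((m : ℝ) * n)) * (1 + r / γ) ^ (-L))
      ≤ ENNReal.ofReal (γ ^ (-((m : ℝ) * n)) * (2:ℝ) ^ L * ((2:ℝ) ^ (-L)) ^ k) *
        (Metric.closedBall (diagE x) ((2:ℝ) ^ k * γ)).indicator (fun _ => (1:ℝ≥0∞)) y := by
        rw [Set.indicator_of_mem hmem, mul_one, mul_assoc]
        exact ENNReal.ofReal_le_ofReal
          (mul_le_mul_of_nonneg_left key (Real.rpow_nonneg hγ.le _))
    _ ≤ _ := ENNReal.le_tsum k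

lemma const_identity (m n k : ℕ) {L γ : ℝ} (hγ : 0 < γ) :
    γ ^ (-((m:ℝ)*n)) * (2:ℝ)^L * ((2:ℝ)^(-L))^k * (2*((2:ℝ)^k*γ))^(m*n) =
    (2:ℝ)^(L + (m:ℝ)*n) * ((2:ℝ)^((m:ℝ)*n - L))^k := by
  have h2 : (0:ℝ) < 2 := two_pos
  have e1 : (2*((2:ℝ)^k*γ))^(m*n) =
      (2:ℝ)^((1 + (k:ℝ)) * ((m*n : ℕ):ℝ)) * γ^(((m*n : ℕ)):ℝ) := by
    rw [mul_pow, mul_pow, ← pow_mul, ← Real.rpow_natCast γ (m*n),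
      ← Real.rpow_natCast (2:ℝ) (m*n), ← Real.rpow_natCast (2:ℝ) (k*(m*n)),
      ← mul_assoc, ← Real.rpow_add h2]
    congr 2
    push_cast
    ring
  have e2 : ((2:ℝ)^(-L))^k = (2:ℝ)^((-L)*(k:ℝ)) := by
    rw [← Real.rpow_natCast ((2:ℝ)^(-L)) k, ← Real.rpow_mul h2.le]
  have e3 : ((2:ℝ)^((m:ℝ)*n - L))^k = (2:ℝ)^(((m:ℝ)*n - L)*(k:ℝ)) := by
    rw [← Real.rpow_natCast ((2:ℝ)^((m:ℝ)*n - L)) k, ← Real.rpow_mul h2.le]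
  rw [e1, e2, e3,
    show γ ^ (-((m:ℝ)*n)) * (2:ℝ)^L * (2:ℝ)^((-L)*(k:ℝ)) *
        ((2:ℝ)^((1 + (k:ℝ)) * ((m*n : ℕ):ℝ)) * γ^(((m*n : ℕ)):ℝ)) =
      ((2:ℝ)^L * (2:ℝ)^((-L)*(k:ℝ)) * (2:ℝ)^((1 + (k:ℝ)) * ((m*n : ℕ):ℝ))) *
        (γ ^ (-((m:ℝ)*n)) * γ^(((m*n : ℕ)):ℝ)) from by ring,
    ← Real.rpow_add hγ]
  have hg0 : -((m:ℝ)*n) + ((m*n : ℕ):ℝ) = 0 := by push_cast; ring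
  rw [hg0, Real.rpow_zero, mul_one, ← Real.rpow_add h2, ← Real.rpow_add h2, ← Real.rpow_add h2]
  congr 1
  push_cast
  ring


/-- Lemma 2.2: the multilinear maximal control of Poisson-type kernels. -/
theorem multilinear_maximal_control
    (m n : ℕ) (hm : 1 ≤ m) (hn : 1 ≤ n) (L : ℝ) (hL : (m : ℝ) * n < L) :
    ∃ C : ℝ≥0∞, C ≠ ⊤ ∧
      ∀ (x : Rn n) (f : Fin m → Rn n → ℝ), (∀ j, BddCompactSupp (f j)) →
        (⨆ (γ : ℝ) (_ : 0 < γ),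
            ∫⁻ y : Emn m n,
              ENNReal.ofReal (γ ^ (-((m : ℝ) * n)) * (1 + ‖diagE x - y‖ / γ) ^ (-L)) *
                ∏ j, (‖f j (projE y j)‖₊ : ℝ≥0∞)) ≤
          C * MM f x := by
  have hL0 : 0 < L := lt_of_le_of_lt (by positivity) hL
  set ρ : ℝ := (2:ℝ) ^ ((m:ℝ)*n - L) with hρ
  have hρpos : 0 < ρ := Real.rpow_pos_of_pos two_pos _
  have hρlt : ρ < 1 := Real.rpow_lt_one_of_one_lt_of_neg one_lt_two (by linarith)
  have hρlt' : ENNReal.ofReal ρ < 1 := by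
    rw [← ENNReal.ofReal_one]
    exact ENNReal.ofReal_lt_ofReal_iff one_pos |>.mpr hρlt
  refine ⟨ENNReal.ofReal ((2:ℝ)^(L + (m:ℝ)*n)) * (1 - ENNReal.ofReal ρ)⁻¹, ?_, ?_⟩
  · refine ENNReal.mul_ne_top ENNReal.ofReal_ne_top (ENNReal.inv_ne_top.mpr ?_)
    simp only [ne_eq, tsub_eq_zero_iff_le, not_le]
    exact hρlt'
  intro x f hf
  have hfm : ∀ j, Measurable (f j) := fun j => (hf j).1
  refine iSup_le fun γ => iSup_le fun hγ => ?_
  have hg : ∀ j, Measurable fun u : Rn n => (‖f j u‖₊ : ℝ≥0∞) := fun j =>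
    (hfm j).nnnorm.coe_nnreal_ennreal
  have hprod : Measurable fun y : Emn m n => ∏ j, (‖f j (projE y j)‖₊ : ℝ≥0∞) :=
    Finset.measurable_prod _ fun j _ =>
      (hg j).comp ((WithLp.measurable_toLp 2 _).comp (measurable_pi_lambda _ fun i => (measurable_pi_apply _).comp (WithLp.measurable_ofLp 2 _)))
  have hterm : ∀ k : ℕ,
      ENNReal.ofReal (γ ^ (-((m:ℝ)*n)) * (2:ℝ)^L * ((2:ℝ)^(-L))^k) *
        (ENNReal.ofReal (2*((2:ℝ)^k*γ)) ^ (m*n)) =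
      ENNReal.ofReal ((2:ℝ)^(L + (m:ℝ)*n)) * (ENNReal.ofReal ρ)^k := by
    intro k
    rw [← ENNReal.ofReal_pow (by positivity), ← ENNReal.ofReal_mul (by positivity),
      const_identity m n k hγ, ENNReal.ofReal_mul (by positivity),
      ENNReal.ofReal_pow hρpos.le]
  calc ∫⁻ y : Emn m n,
        ENNReal.ofReal (γ ^ (-((m : ℝ) * n)) * (1 + ‖diagE x - y‖ / γ) ^ (-L)) *
          ∏ j, (‖f j (projE y j)‖₊ : ℝ≥0∞)
      ≤ ∫⁻ y : Emn m n,
          (∑' k : ℕ, ENNReal.ofReal (γ ^ (-((m:ℝ)*n)) * (2:ℝ)^L * ((2:ℝ)^(-L))^k) *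
            (Metric.closedBall (diagE x) ((2:ℝ)^k * γ)).indicator (fun _ => (1:ℝ≥0∞)) y) *
          ∏ j, (‖f j (projE y j)‖₊ : ℝ≥0∞) :=
        lintegral_mono fun y => mul_le_mul_left (kernel_pointwise hL0 γ hγ x y) _
    _ = ∑' k : ℕ, ∫⁻ y : Emn m n,
          ENNReal.ofReal (γ ^ (-((m:ℝ)*n)) * (2:ℝ)^L * ((2:ℝ)^(-L))^k) *
            ((Metric.closedBall (diagE x) ((2:ℝ)^k * γ)).indicator (fun _ => (1:ℝ≥0∞)) y *
            ∏ j, (‖f j (projE y j)‖₊ : ℝ≥0∞)) := by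
        have hre : (fun y : Emn m n =>
            (∑' k : ℕ, ENNReal.ofReal (γ ^ (-((m:ℝ)*n)) * (2:ℝ)^L * ((2:ℝ)^(-L))^k) *
              (Metric.closedBall (diagE x) ((2:ℝ)^k * γ)).indicator (fun _ => (1:ℝ≥0∞)) y) *
            ∏ j, (‖f j (projE y j)‖₊ : ℝ≥0∞)) = fun y : Emn m n =>
            ∑' k : ℕ, ENNReal.ofReal (γ ^ (-((m:ℝ)*n)) * (2:ℝ)^L * ((2:ℝ)^(-L))^k) *
              ((Metric.closedBall (diagE x) ((2:ℝ)^k * γ)).indicator (fun _ => (1:ℝ≥0∞)) y *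
              ∏ j, (‖f j (projE y j)‖₊ : ℝ≥0∞)) := by
          funext y
          rw [← ENNReal.tsum_mul_right]
          exact tsum_congr fun k => mul_assoc _ _ _
        rw [hre]
        exact lintegral_tsum fun k =>
          (measurable_const.mul (((measurable_one.indicator measurableSet_closedBall)).mul
            hprod)).aemeasurable
    _ = ∑' k : ℕ, ENNReal.ofReal (γ ^ (-((m:ℝ)*n)) * (2:ℝ)^L * ((2:ℝ)^(-L))^k) *
          ∫⁻ y in Metric.closedBall (diagE x) ((2:ℝ)^k * γ),
            ∏ j, (‖f j (projE y j)‖₊ : ℝ≥0∞) := by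
        refine tsum_congr fun k => ?_
        have hind : ∀ y : Emn m n,
            (Metric.closedBall (diagE x) ((2:ℝ)^k * γ)).indicator (fun _ => (1:ℝ≥0∞)) y *
              ∏ j, (‖f j (projE y j)‖₊ : ℝ≥0∞) =
            (Metric.closedBall (diagE x) ((2:ℝ)^k * γ)).indicator
              (fun y => ∏ j, (‖f j (projE y j)‖₊ : ℝ≥0∞)) y := by
          intro y
          by_cases hy : y ∈ Metric.closedBall (diagE x) ((2:ℝ)^k * γ) <;> simp [hy]
        simp_rw [hind]
        rw [lintegral_const_mul _ (hprod.indicator measurableSet_closedBall),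
          lintegral_indicator measurableSet_closedBall]
    _ ≤ ∑' k : ℕ, ENNReal.ofReal (γ ^ (-((m:ℝ)*n)) * (2:ℝ)^L * ((2:ℝ)^(-L))^k) *
          (ENNReal.ofReal (2*((2:ℝ)^k*γ)) ^ (m*n) * MM f x) :=
        ENNReal.tsum_le_tsum fun k =>
          mul_le_mul_right (ball_bound x f hfm _ (by positivity)) _
    _ = (∑' k : ℕ, ENNReal.ofReal ((2:ℝ)^(L + (m:ℝ)*n)) * (ENNReal.ofReal ρ)^k) * MM f x := by
        refine Eq.trans (tsum_congr fun k => ?_) ENNReal.tsum_mul_right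
        rw [← mul_assoc, hterm k]
    _ = ENNReal.ofReal ((2:ℝ)^(L + (m:ℝ)*n)) * (1 - ENNReal.ofReal ρ)⁻¹ * MM f x := by
        rw [ENNReal.tsum_mul_left, ENNReal.tsum_geometric]


end RoughMSI
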